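/- Let T ∈ (0,∞) and f ∈ L¹(0,T;ℝ^m). If ∫₀^T ⟨f(t), u(t)⟩ dt = 0 for every u ∈ L^∞(0,T;ℝ^m) with ∫₀^T exp((T−s)·A)·(B·u(s)) ds = 0, then there exists z ∈ ℝⁿ such that f(t) = B^⊤·exp((T−t)·A^⊤)·z for a.e. t ∈ (0,T). -/

import Mathlib

/-!
Setting: fix `n, m ≥ 1`, a matrix `A ∈ ℝ^{n×n}` and a nonzero matrix `B ∈ ℝ^{n×m}`.
States live in `EuclideanSpace ℝ (Fin n)` and control values in `EuclideanSpace ℝ (Fin m)`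
(so that all norms are the Euclidean ones).  For `y₀ ∈ ℝⁿ`, `t ≥ 0` and a control `u`,
the state is `y(t;y₀,u) = e^{tA} y₀ + ∫₀ᵗ e^{(t-s)A} B u(s) ds`.
-/

open MeasureTheory Set Matrix
open scoped ENNReal RealInnerProductSpace

noncomputable section

namespace ControlBBP

/-- Matrix–vector multiplication, regarded as a map between Euclidean spaces. -/
def mulVecE {a b : ℕ} (M : Matrix (Fin a) (Fin b) ℝ)
    (x : EuclideanSpace ℝ (Fin b)) : EuclideanSpace ℝ (Fin a) :=
  (EuclideanSpace.equiv (Fin a) ℝ).symm (M.mulVec (EuclideanSpace.equiv (Fin b) ℝ x))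

variable {n m : ℕ}

/-- `∫₀ᵀ e^{(T-s)A} B v(s) ds`, the state at time `T` starting from `0` with control `v`. -/
def reachOutput (A : Matrix (Fin n) (Fin n) ℝ) (B : Matrix (Fin n) (Fin m) ℝ)
    (T : ℝ) (v : ℝ → EuclideanSpace ℝ (Fin m)) : EuclideanSpace ℝ (Fin n) :=
  ∫ s in Ioc (0 : ℝ) T, mulVecE (NormedSpace.exp ((T - s) • A)) (mulVecE B (v s))

/-- The state `y(t; y₀, u) = e^{tA} y₀ + ∫₀ᵗ e^{(t-s)A} B u(s) ds`. -/
def state (A : Matrix (Fin n) (Fin n) ℝ) (B : Matrix (Fin n) (Fin m) ℝ)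
    (y0 : EuclideanSpace ℝ (Fin n)) (t : ℝ) (u : ℝ → EuclideanSpace ℝ (Fin m)) :
    EuclideanSpace ℝ (Fin n) :=
  mulVecE (NormedSpace.exp (t • A)) y0 + reachOutput A B t u

/-- The `L^∞(0,T;ℝ^m)`-norm of a control, valued in `[0,∞]`. -/
def supNorm (T : ℝ) (v : ℝ → EuclideanSpace ℝ (Fin m)) : ℝ≥0∞ :=
  eLpNorm v ⊤ (volume.restrict (Ioo (0 : ℝ) T))

/-- `v` is an admissible control for the minimal norm problem `(NP)^{T,y₀}`:
it is measurable, essentially bounded on `(0,T)`, and steers `y₀` to `0` at time `T`. -/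
def NPAdmissible (A : Matrix (Fin n) (Fin n) ℝ) (B : Matrix (Fin n) (Fin m) ℝ)
    (T : ℝ) (y0 : EuclideanSpace ℝ (Fin n)) (v : ℝ → EuclideanSpace ℝ (Fin m)) : Prop :=
  Measurable v ∧ supNorm T v < ⊤ ∧ state A B y0 T v = 0

/-- The minimal norm `N(T,y₀) ∈ [0,∞]` (with `inf ∅ = ∞`). -/
def Nmin (A : Matrix (Fin n) (Fin n) ℝ) (B : Matrix (Fin n) (Fin m) ℝ)
    (T : ℝ) (y0 : EuclideanSpace ℝ (Fin n)) : ℝ≥0∞ :=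
  ⨅ (v : ℝ → EuclideanSpace ℝ (Fin m)) (_ : NPAdmissible A B T y0 v), supNorm T v

/-- `v` is a minimal norm control for `(NP)^{T,y₀}`. -/
def IsMinNormControl (A : Matrix (Fin n) (Fin n) ℝ) (B : Matrix (Fin n) (Fin m) ℝ)
    (T : ℝ) (y0 : EuclideanSpace ℝ (Fin n)) (v : ℝ → EuclideanSpace ℝ (Fin m)) : Prop :=
  NPAdmissible A B T y0 v ∧ supNorm T v = Nmin A B T y0

/-- `(NP)^{T,y₀}` has the bang-bang property: every minimal norm control `v` satisfies
`‖v(t)‖ = N(T,y₀)` for a.e. `t ∈ (0,T)`. -/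
def NPBangBang (A : Matrix (Fin n) (Fin n) ℝ) (B : Matrix (Fin n) (Fin m) ℝ)
    (T : ℝ) (y0 : EuclideanSpace ℝ (Fin n)) : Prop :=
  ∀ v, IsMinNormControl A B T y0 v →
    ∀ᵐ t ∂(volume.restrict (Ioo (0 : ℝ) T)), ‖v t‖ = (Nmin A B T y0).toReal

/-- `ℛ`, the span of the columns of `B, AB, A²B, …, AⁿB`. -/
def reach (A : Matrix (Fin n) (Fin n) ℝ) (B : Matrix (Fin n) (Fin m) ℝ) :
    Submodule ℝ (EuclideanSpace ℝ (Fin n)) :=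
  Submodule.span ℝ
    {x | ∃ (k : ℕ) (j : Fin m), k ≤ n ∧ x = mulVecE (A ^ k * B) (EuclideanSpace.single j 1)}

/-- Membership in the constraint set `𝒰^M`: measurable and `‖u(t)‖ ≤ M` a.e. on `(0,∞)`. -/
def MemU (M : ℝ) (u : ℝ → EuclideanSpace ℝ (Fin m)) : Prop :=
  Measurable u ∧ ∀ᵐ t ∂(volume.restrict (Ioi (0 : ℝ))), ‖u t‖ ≤ M

/-- `u` is an admissible control for the minimal time problem `(TP)^{M,y₀}`. -/
def TPAdmissible (A : Matrix (Fin n) (Fin n) ℝ) (B : Matrix (Fin n) (Fin m) ℝ)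
    (M : ℝ) (y0 : EuclideanSpace ℝ (Fin n)) (u : ℝ → EuclideanSpace ℝ (Fin m)) : Prop :=
  MemU M u ∧ ∃ t : ℝ, 0 < t ∧ state A B y0 t u = 0

/-- The minimal time `T(M,y₀) ∈ (0,∞]` (with `inf ∅ = ∞`). -/
def minTime (A : Matrix (Fin n) (Fin n) ℝ) (B : Matrix (Fin n) (Fin m) ℝ)
    (M : ℝ) (y0 : EuclideanSpace ℝ (Fin n)) : ℝ≥0∞ :=
  ⨅ (t : ℝ) (_ : 0 < t ∧ ∃ u, MemU M u ∧ state A B y0 t u = 0), ENNReal.ofReal t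

/-- `u` is a minimal time control for `(TP)^{M,y₀}`: it lies in `𝒰^M` and
`y(T(M,y₀); y₀, u) = 0`. -/
def IsMinTimeControl (A : Matrix (Fin n) (Fin n) ℝ) (B : Matrix (Fin n) (Fin m) ℝ)
    (M : ℝ) (y0 : EuclideanSpace ℝ (Fin n)) (u : ℝ → EuclideanSpace ℝ (Fin m)) : Prop :=
  MemU M u ∧ state A B y0 (minTime A B M y0).toReal u = 0

/-- `(TP)^{M,y₀}` has the bang-bang property: every minimal time control `u` satisfies
`‖u(t)‖ = M` for a.e. `t ∈ (0, T(M,y₀))`. -/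
def TPBangBang (A : Matrix (Fin n) (Fin n) ℝ) (B : Matrix (Fin n) (Fin m) ℝ)
    (M : ℝ) (y0 : EuclideanSpace ℝ (Fin n)) : Prop :=
  ∀ u, IsMinTimeControl A B M y0 u →
    ∀ᵐ t ∂(volume.restrict (Ioo (0 : ℝ) (minTime A B M y0).toReal)), ‖u t‖ = M

/-- `N(∞,y₀) = inf_{T>0} N(T,y₀)`. -/
def Ninf (A : Matrix (Fin n) (Fin n) ℝ) (B : Matrix (Fin n) (Fin m) ℝ)
    (y0 : EuclideanSpace ℝ (Fin n)) : ℝ≥0∞ :=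
  ⨅ (T : ℝ) (_ : 0 < T), Nmin A B T y0

/-- `t ↦ B^⊤ e^{(T-t)A^⊤} z`. -/
def adjOut (A : Matrix (Fin n) (Fin n) ℝ) (B : Matrix (Fin n) (Fin m) ℝ)
    (T : ℝ) (z : EuclideanSpace ℝ (Fin n)) (t : ℝ) : EuclideanSpace ℝ (Fin m) :=
  mulVecE Bᵀ (mulVecE (NormedSpace.exp ((T - t) • Aᵀ)) z)

/-- The reachable set `R_T`. -/
def reachSet (A : Matrix (Fin n) (Fin n) ℝ) (B : Matrix (Fin n) (Fin m) ℝ)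
    (T : ℝ) : Set (EuclideanSpace ℝ (Fin n)) :=
  {x | ∃ v : ℝ → EuclideanSpace ℝ (Fin m),
    Measurable v ∧ supNorm T v < ⊤ ∧ reachOutput A B T v = x}

/-- The reachable norm `‖x‖_{R_T}`, valued in `[0,∞]`. -/
def reachNorm (A : Matrix (Fin n) (Fin n) ℝ) (B : Matrix (Fin n) (Fin m) ℝ)
    (T : ℝ) (x : EuclideanSpace ℝ (Fin n)) : ℝ≥0∞ :=
  ⨅ (v : ℝ → EuclideanSpace ℝ (Fin m))
    (_ : Measurable v ∧ supNorm T v < ⊤ ∧ reachOutput A B T v = x), supNorm T v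

lemma mulVecE_apply {a b : ℕ} (M : Matrix (Fin a) (Fin b) ℝ) (x : EuclideanSpace ℝ (Fin b))
    (i : Fin a) : mulVecE M x i = M.mulVec (fun j => x j) i := rfl

lemma inner_mulVecE {a b : ℕ} (M : Matrix (Fin a) (Fin b) ℝ) (x : EuclideanSpace ℝ (Fin b))
    (y : EuclideanSpace ℝ (Fin a)) : ⟪mulVecE M x, y⟫ = ⟪x, mulVecE Mᵀ y⟫ := by
  simp only [PiLp.inner_apply, RCLike.inner_apply, starRingEnd_apply, star_trivial,
    mulVecE_apply, Matrix.mulVec, dotProduct, Finset.sum_mul, Finset.mul_sum,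
    Matrix.transpose_apply]
  rw [Finset.sum_comm]
  congr 1; ext i; congr 1; ext j; ring

def mulVecL {a b : ℕ} (M : Matrix (Fin a) (Fin b) ℝ) :
    EuclideanSpace ℝ (Fin b) →ₗ[ℝ] EuclideanSpace ℝ (Fin a) where
  toFun := mulVecE M
  map_add' x y := by
    ext i
    show (M *ᵥ fun j => x j + y j) i = _
    rw [show (fun j => x j + y j) = (fun j => x j) + fun j => y j from rfl, Matrix.mulVec_add]
    rfl
  map_smul' c x := by
    ext i
    show (M *ᵥ fun j => c * x j) i = _
    rw [show (fun j => c * x j) = c • fun j => x j from rfl, Matrix.mulVec_smul]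
    rfl

def mulVecMatL {a b : ℕ} (z : EuclideanSpace ℝ (Fin b)) :
    Matrix (Fin a) (Fin b) ℝ →ₗ[ℝ] EuclideanSpace ℝ (Fin a) where
  toFun M := mulVecE M z
  map_add' M N := by
    ext i
    simp [mulVecE_apply, Matrix.add_mulVec]
  map_smul' c M := by
    ext i
    simp [mulVecE_apply, Matrix.smul_mulVec]



lemma continuous_exp_matrix {k : ℕ} (A : Matrix (Fin k) (Fin k) ℝ) (T : ℝ) :
    Continuous (fun t : ℝ => NormedSpace.exp ((T - t) • A)) := by
  letI : SeminormedRing (Matrix (Fin k) (Fin k) ℝ) := Matrix.linftyOpSemiNormedRing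
  letI : NormedRing (Matrix (Fin k) (Fin k) ℝ) := Matrix.linftyOpNormedRing
  letI : NormedAlgebra ℝ (Matrix (Fin k) (Fin k) ℝ) := Matrix.linftyOpNormedAlgebra
  letI : NormedAlgebra ℚ (Matrix (Fin k) (Fin k) ℝ) := Matrix.linftyOpNormedAlgebra
  exact NormedSpace.exp_continuous.comp ((continuous_const.sub continuous_id).smul continuous_const)

lemma continuous_adjOut (A : Matrix (Fin n) (Fin n) ℝ) (B : Matrix (Fin n) (Fin m) ℝ)
    (T : ℝ) (z : EuclideanSpace ℝ (Fin n)) : Continuous (adjOut A B T z) := by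
  have h1 : Continuous fun t : ℝ => mulVecE (NormedSpace.exp ((T - t) • Aᵀ)) z :=
    (mulVecMatL z).continuous_of_finiteDimensional.comp (continuous_exp_matrix Aᵀ T)
  exact (mulVecL Bᵀ).continuous_of_finiteDimensional.comp h1

-- linearity of adjOut in z
lemma adjOut_add (A : Matrix (Fin n) (Fin n) ℝ) (B : Matrix (Fin n) (Fin m) ℝ) (T : ℝ)
    (z w : EuclideanSpace ℝ (Fin n)) (t : ℝ) :
    adjOut A B T (z + w) t = adjOut A B T z t + adjOut A B T w t := by
  simp only [adjOut, show ∀ x y, mulVecE (NormedSpace.exp ((T - t) • Aᵀ)) (x + y) =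
    mulVecE _ x + mulVecE _ y from fun x y => (mulVecL _).map_add x y,
    show ∀ x y, mulVecE Bᵀ (x + y) = mulVecE Bᵀ x + mulVecE Bᵀ y from
      fun x y => (mulVecL _).map_add x y]

lemma adjOut_smul (A : Matrix (Fin n) (Fin n) ℝ) (B : Matrix (Fin n) (Fin m) ℝ) (T : ℝ)
    (c : ℝ) (z : EuclideanSpace ℝ (Fin n)) (t : ℝ) :
    adjOut A B T (c • z) t = c • adjOut A B T z t := by
  simp only [adjOut, show mulVecE (NormedSpace.exp ((T - t) • Aᵀ)) (c • z) =
      c • mulVecE (NormedSpace.exp ((T - t) • Aᵀ)) z from (mulVecL _).map_smul c z,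
    show ∀ x, mulVecE Bᵀ (c • x) = c • mulVecE Bᵀ x from fun x => (mulVecL _).map_smul c x]

lemma exp_smul_transpose {k : ℕ} (A : Matrix (Fin k) (Fin k) ℝ) (c : ℝ) :
    (NormedSpace.exp (c • A))ᵀ = NormedSpace.exp (c • Aᵀ) := by
  rw [← Matrix.transpose_smul, Matrix.exp_transpose]

lemma inner_integrand (A : Matrix (Fin n) (Fin n) ℝ) (B : Matrix (Fin n) (Fin m) ℝ)
    (T : ℝ) (x : EuclideanSpace ℝ (Fin n)) (w : EuclideanSpace ℝ (Fin m)) (s : ℝ) :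
    ⟪mulVecE (NormedSpace.exp ((T - s) • A)) (mulVecE B w), x⟫ = ⟪w, adjOut A B T x s⟫ := by
  rw [inner_mulVecE, inner_mulVecE, adjOut, exp_smul_transpose]

lemma euclidean_decomp {k : ℕ} (w : EuclideanSpace ℝ (Fin k)) :
    w = ∑ i : Fin k, w i • EuclideanSpace.single i (1 : ℝ) := by
  ext j
  rw [WithLp.ofLp_sum, Finset.sum_apply]
  simp [EuclideanSpace.single_apply]


lemma restrict_Ioo_eq_Ioc (T : ℝ) :
    (volume : Measure ℝ).restrict (Ioo (0 : ℝ) T) = volume.restrict (Ioc 0 T) :=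
  Measure.restrict_congr_set Ioo_ae_eq_Ioc

lemma ae_bound_of_supNorm_lt_top {T : ℝ} {u : ℝ → EuclideanSpace ℝ (Fin m)}
    (hu : supNorm T u < ⊤) :
    ∃ C : ℝ, 0 ≤ C ∧ ∀ᵐ t ∂(volume.restrict (Ioc (0:ℝ) T)), ‖u t‖ ≤ C := by
  refine ⟨(eLpNormEssSup u (volume.restrict (Ioc (0:ℝ) T))).toReal, ENNReal.toReal_nonneg, ?_⟩
  have hlt : eLpNormEssSup u (volume.restrict (Ioc (0:ℝ) T)) < ⊤ := by
    have := hu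
    rw [supNorm, restrict_Ioo_eq_Ioc, eLpNorm_exponent_top] at this
    exact this
  filter_upwards [ae_le_eLpNormEssSup (f := u) (μ := volume.restrict (Ioc (0:ℝ) T))] with t ht
  have : (‖u t‖₊ : ℝ≥0∞).toReal ≤ (eLpNormEssSup u (volume.restrict (Ioc (0:ℝ) T))).toReal :=
    ENNReal.toReal_mono hlt.ne ht
  simpa using this

lemma supNorm_lt_top_of_bound {T C : ℝ} {u : ℝ → EuclideanSpace ℝ (Fin m)}
    (h : ∀ t, ‖u t‖ ≤ C) : supNorm T u < ⊤ := by
  have := eLpNorm_le_of_ae_bound (μ := volume.restrict (Ioo (0:ℝ) T)) (p := ⊤) (f := u)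
    (C := C) (Filter.Eventually.of_forall h)
  calc supNorm T u ≤ _ := this
  _ < ⊤ := by simp [ENNReal.ofReal_lt_top, ENNReal.mul_lt_top]


def mulVecLL {a b : ℕ} : Matrix (Fin a) (Fin b) ℝ →ₗ[ℝ]
    (EuclideanSpace ℝ (Fin b) →ₗ[ℝ] EuclideanSpace ℝ (Fin a)) where
  toFun := mulVecL
  map_add' M N := LinearMap.ext fun x => (mulVecMatL x).map_add M N
  map_smul' c M := LinearMap.ext fun x => (mulVecMatL x).map_smul c M

def mulVecCL {a b : ℕ} (M : Matrix (Fin a) (Fin b) ℝ) :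
    EuclideanSpace ℝ (Fin b) →L[ℝ] EuclideanSpace ℝ (Fin a) :=
  LinearMap.toContinuousLinearMap (mulVecL M)

lemma mulVecCL_apply {a b : ℕ} (M : Matrix (Fin a) (Fin b) ℝ) (x) :
    mulVecCL M x = mulVecE M x := rfl

lemma continuous_mulVecCL {a b : ℕ} {X : Type*} [TopologicalSpace X]
    {F : X → Matrix (Fin a) (Fin b) ℝ} (hF : Continuous F) :
    Continuous fun x => mulVecCL (F x) := by
  have : Continuous fun M : Matrix (Fin a) (Fin b) ℝ => mulVecCL M := by
    exact ((LinearMap.toContinuousLinearMap.toLinearMap.comp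
      (mulVecLL (a := a) (b := b)))).continuous_of_finiteDimensional
  exact this.comp hF

lemma continuous_kernel (A : Matrix (Fin n) (Fin n) ℝ) (B : Matrix (Fin n) (Fin m) ℝ) (T : ℝ) :
    Continuous fun p : ℝ × EuclideanSpace ℝ (Fin m) =>
      mulVecE (NormedSpace.exp ((T - p.1) • A)) (mulVecE B p.2) := by
  have h1 : Continuous fun p : ℝ × EuclideanSpace ℝ (Fin m) =>
      mulVecCL (NormedSpace.exp ((T - p.1) • A)) :=
    continuous_mulVecCL ((continuous_exp_matrix A T).comp continuous_fst)
  have h2 : Continuous fun p : ℝ × EuclideanSpace ℝ (Fin m) => mulVecE B p.2 :=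
    (mulVecL B).continuous_of_finiteDimensional.comp continuous_snd
  exact h1.clm_apply h2

lemma integrable_reach_integrand (A : Matrix (Fin n) (Fin n) ℝ) (B : Matrix (Fin n) (Fin m) ℝ)
    {T : ℝ} {u : ℝ → EuclideanSpace ℝ (Fin m)} (hu : Measurable u) (hb : supNorm T u < ⊤) :
    IntegrableOn (fun s => mulVecE (NormedSpace.exp ((T - s) • A)) (mulVecE B (u s)))
      (Ioc (0:ℝ) T) := by
  obtain ⟨C, hC0, hC⟩ := ae_bound_of_supNorm_lt_top hb
  have hmeas : AEStronglyMeasurable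
      (fun s => mulVecE (NormedSpace.exp ((T - s) • A)) (mulVecE B (u s)))
      (volume.restrict (Ioc (0:ℝ) T)) :=
    ((continuous_kernel A B T).measurable.comp (measurable_id.prodMk hu)).aestronglyMeasurable
  have hcont : Continuous fun s : ℝ => ‖mulVecCL (a := n) (NormedSpace.exp ((T - s) • A))‖ :=
    (continuous_mulVecCL (continuous_exp_matrix A T)).norm
  obtain ⟨D, hD⟩ := isCompact_Icc.exists_bound_of_continuousOn
    (s := Icc (0:ℝ) T) hcont.continuousOn
  set D' := max D 0 with hD'def
  have hD0 : 0 ≤ D' := le_max_right _ _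
  have hD2 : ∀ s ∈ Icc (0:ℝ) T, ‖mulVecCL (a := n) (NormedSpace.exp ((T - s) • A))‖ ≤ D' :=
    by
    intro s hs
    have h := hD s hs
    rw [Real.norm_eq_abs, abs_of_nonneg (norm_nonneg _)] at h
    exact le_trans h (le_max_left _ _)
  refine Integrable.mono' (g := fun _ => D' * (‖mulVecCL B‖ * C))
    (integrableOn_const measure_Ioc_lt_top.ne) hmeas ?_
  filter_upwards [hC, ae_restrict_mem measurableSet_Ioc] with s hs1 hs2
  have h1 : ‖mulVecE (NormedSpace.exp ((T - s) • A)) (mulVecE B (u s))‖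
      ≤ ‖mulVecCL (a := n) (NormedSpace.exp ((T - s) • A))‖ * ‖mulVecE B (u s)‖ := by
    rw [← mulVecCL_apply]; exact ContinuousLinearMap.le_opNorm _ _
  have h2 : ‖mulVecE B (u s)‖ ≤ ‖mulVecCL B‖ * ‖u s‖ := by
    rw [← mulVecCL_apply]; exact ContinuousLinearMap.le_opNorm _ _
  calc ‖mulVecE (NormedSpace.exp ((T - s) • A)) (mulVecE B (u s))‖
      ≤ ‖mulVecCL (a := n) (NormedSpace.exp ((T - s) • A))‖ * ‖mulVecE B (u s)‖ := h1
    _ ≤ D' * (‖mulVecCL B‖ * C) := by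
        apply mul_le_mul
        · exact hD2 s ⟨le_of_lt hs2.1, hs2.2⟩
        · exact le_trans h2 (mul_le_mul_of_nonneg_left hs1 (norm_nonneg _))
        · exact norm_nonneg _
        · exact hD0

lemma inner_reachOutput (A : Matrix (Fin n) (Fin n) ℝ) (B : Matrix (Fin n) (Fin m) ℝ)
    {T : ℝ} {u : ℝ → EuclideanSpace ℝ (Fin m)} (hu : Measurable u) (hb : supNorm T u < ⊤)
    (x : EuclideanSpace ℝ (Fin n)) :
    ⟪x, reachOutput A B T u⟫ = ∫ s in Ioc (0:ℝ) T, ⟪u s, adjOut A B T x s⟫ := by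
  rw [reachOutput, ← integral_inner (integrable_reach_integrand A B hu hb)]
  refine setIntegral_congr_fun measurableSet_Ioc fun s _ => ?_
  rw [real_inner_comm, inner_integrand]

lemma integrable_inner_adjOut_right {T : ℝ} (A : Matrix (Fin n) (Fin n) ℝ)
    (B : Matrix (Fin n) (Fin m) ℝ) {u : ℝ → EuclideanSpace ℝ (Fin m)} (hu : Measurable u)
    (hb : supNorm T u < ⊤) (x : EuclideanSpace ℝ (Fin n)) :
    Integrable (fun t => ⟪u t, adjOut A B T x t⟫) (volume.restrict (Ioc (0:ℝ) T)) := by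
  obtain ⟨C, hC0, hC⟩ := ae_bound_of_supNorm_lt_top hb
  obtain ⟨D, hD⟩ := isCompact_Icc.exists_bound_of_continuousOn
    (s := Icc (0:ℝ) T) (continuous_adjOut A B T x).continuousOn
  have hmeas : AEStronglyMeasurable (fun t => ⟪u t, adjOut A B T x t⟫)
      (volume.restrict (Ioc (0:ℝ) T)) :=
    (hu.aestronglyMeasurable.inner (continuous_adjOut A B T x).aestronglyMeasurable)
  refine Integrable.mono' (g := fun _ => C * D)
    (integrableOn_const measure_Ioc_lt_top.ne) hmeas ?_
  filter_upwards [hC, ae_restrict_mem measurableSet_Ioc] with s hs1 hs2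
  have h1 : ‖⟪u s, adjOut A B T x s⟫‖ ≤ ‖u s‖ * ‖adjOut A B T x s‖ := norm_inner_le_norm _ _
  refine le_trans h1 (mul_le_mul hs1 (hD s ⟨le_of_lt hs2.1, hs2.2⟩) (norm_nonneg _) hC0)

def adjOutL (A : Matrix (Fin n) (Fin n) ℝ) (B : Matrix (Fin n) (Fin m) ℝ) (T t : ℝ) :
    EuclideanSpace ℝ (Fin n) →ₗ[ℝ] EuclideanSpace ℝ (Fin m) where
  toFun z := adjOut A B T z t
  map_add' z w := adjOut_add A B T z w t
  map_smul' c z := adjOut_smul A B T c z t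

def vecInt (A : Matrix (Fin n) (Fin n) ℝ) (B : Matrix (Fin n) (Fin m) ℝ) (T : ℝ)
    (h : ℝ → EuclideanSpace ℝ (Fin m)) : EuclideanSpace ℝ (Fin n) :=
  (EuclideanSpace.equiv (Fin n) ℝ).symm fun i =>
    ∫ t in Ioc (0:ℝ) T, ⟪h t, adjOut A B T (EuclideanSpace.single i 1) t⟫

lemma vecInt_apply (A : Matrix (Fin n) (Fin n) ℝ) (B : Matrix (Fin n) (Fin m) ℝ) (T : ℝ)
    (h : ℝ → EuclideanSpace ℝ (Fin m)) (i : Fin n) :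
    vecInt A B T h i = ∫ t in Ioc (0:ℝ) T, ⟪h t, adjOut A B T (EuclideanSpace.single i 1) t⟫ :=
  rfl

lemma inner_vecInt (A : Matrix (Fin n) (Fin n) ℝ) (B : Matrix (Fin n) (Fin m) ℝ) (T : ℝ)
    (h : ℝ → EuclideanSpace ℝ (Fin m))
    (hint : ∀ w, Integrable (fun t => ⟪h t, adjOut A B T w t⟫) (volume.restrict (Ioc (0:ℝ) T)))
    (w : EuclideanSpace ℝ (Fin n)) :
    ⟪vecInt A B T h, w⟫ = ∫ t in Ioc (0:ℝ) T, ⟪h t, adjOut A B T w t⟫ := by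
  have key : ∀ t, ∑ i : Fin n,
      ⟪h t, adjOut A B T (EuclideanSpace.single i 1) t⟫ * w i = ⟪h t, adjOut A B T w t⟫ := by
    intro t
    have : adjOut A B T w t = ∑ i : Fin n, w i • adjOut A B T (EuclideanSpace.single i 1) t := by
      conv_lhs => rw [show adjOut A B T w t = adjOutL A B T t w from rfl, euclidean_decomp w]
      rw [map_sum]
      exact Finset.sum_congr rfl fun i _ => (adjOutL A B T t).map_smul (w i) _
    rw [this, inner_sum]
    exact Finset.sum_congr rfl fun i _ => by rw [real_inner_smul_right]; ring
  have lhs : ⟪vecInt A B T h, w⟫ = ∑ i : Fin n,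
      (∫ t in Ioc (0:ℝ) T, ⟪h t, adjOut A B T (EuclideanSpace.single i 1) t⟫) * w i := by
    simp [PiLp.inner_apply, RCLike.inner_apply, vecInt_apply]
    exact Finset.sum_congr rfl fun _ _ => mul_comm _ _
  rw [lhs]
  have : ∀ i : Fin n, (∫ t in Ioc (0:ℝ) T, ⟪h t, adjOut A B T (EuclideanSpace.single i 1) t⟫)
      * w i = ∫ t in Ioc (0:ℝ) T, ⟪h t, adjOut A B T (EuclideanSpace.single i 1) t⟫ * w i :=
    fun i => (integral_mul_const _ _).symm
  rw [Finset.sum_congr rfl fun i _ => this i,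
    ← integral_finset_sum _ fun i _ => (hint (EuclideanSpace.single i 1)).mul_const (w i)]
  exact setIntegral_congr_fun measurableSet_Ioc fun t _ => key t

lemma supNorm_lt_top_of_bound_on {T C : ℝ} {u : ℝ → EuclideanSpace ℝ (Fin m)}
    (h : ∀ t ∈ Ioo (0:ℝ) T, ‖u t‖ ≤ C) : supNorm T u < ⊤ := by
  have hb : ∀ᵐ t ∂(volume.restrict (Ioo (0:ℝ) T)), ‖u t‖ ≤ C := by
    filter_upwards [ae_restrict_mem measurableSet_Ioo] with t ht using h t ht
  have := eLpNorm_le_of_ae_bound (p := ⊤) hb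
  calc supNorm T u ≤ _ := this
  _ < ⊤ := by simp [ENNReal.ofReal_lt_top, ENNReal.mul_lt_top]

lemma supNorm_adjOut_lt_top (A : Matrix (Fin n) (Fin n) ℝ) (B : Matrix (Fin n) (Fin m) ℝ)
    (T : ℝ) (z : EuclideanSpace ℝ (Fin n)) : supNorm T (adjOut A B T z) < ⊤ := by
  obtain ⟨D, hD⟩ := isCompact_Icc.exists_bound_of_continuousOn
    (s := Icc (0:ℝ) T) (continuous_adjOut A B T z).continuousOn
  exact supNorm_lt_top_of_bound_on fun t ht => by
    exact hD t ⟨le_of_lt ht.1, le_of_lt ht.2⟩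

lemma integrable_inner_adjOut_pair (A : Matrix (Fin n) (Fin n) ℝ) (B : Matrix (Fin n) (Fin m) ℝ)
    (T : ℝ) (z w : EuclideanSpace ℝ (Fin n)) :
    Integrable (fun t => ⟪adjOut A B T z t, adjOut A B T w t⟫)
      (volume.restrict (Ioc (0:ℝ) T)) :=
  ((continuous_adjOut A B T z).inner (continuous_adjOut A B T w)).integrableOn_Ioc

def gram (A : Matrix (Fin n) (Fin n) ℝ) (B : Matrix (Fin n) (Fin m) ℝ) (T : ℝ) :
    EuclideanSpace ℝ (Fin n) →ₗ[ℝ] EuclideanSpace ℝ (Fin n) where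
  toFun z := vecInt A B T (adjOut A B T z)
  map_add' z w := by
    ext i
    show vecInt A B T (adjOut A B T (z + w)) i
      = vecInt A B T (adjOut A B T z) i + vecInt A B T (adjOut A B T w) i
    rw [vecInt_apply, vecInt_apply, vecInt_apply,
      ← integral_add (integrable_inner_adjOut_pair A B T z _)
        (integrable_inner_adjOut_pair A B T w _)]
    refine setIntegral_congr_fun measurableSet_Ioc fun t _ => ?_
    rw [adjOut_add, inner_add_left]
  map_smul' c z := by
    ext i
    show vecInt A B T (adjOut A B T (c • z)) i = (c • vecInt A B T (adjOut A B T z)) i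
    rw [PiLp.smul_apply, vecInt_apply, vecInt_apply, smul_eq_mul,
      ← integral_const_mul c]
    refine setIntegral_congr_fun measurableSet_Ioc fun t _ => ?_
    rw [adjOut_smul, real_inner_smul_left]

lemma gram_inner (A : Matrix (Fin n) (Fin n) ℝ) (B : Matrix (Fin n) (Fin m) ℝ) (T : ℝ)
    (z w : EuclideanSpace ℝ (Fin n)) :
    ⟪gram A B T z, w⟫ = ∫ t in Ioc (0:ℝ) T, ⟪adjOut A B T z t, adjOut A B T w t⟫ :=
  inner_vecInt A B T _ (fun w' => integrable_inner_adjOut_pair A B T z w') w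

lemma gram_symm (A : Matrix (Fin n) (Fin n) ℝ) (B : Matrix (Fin n) (Fin m) ℝ) (T : ℝ)
    (z w : EuclideanSpace ℝ (Fin n)) :
    ⟪gram A B T z, w⟫ = ⟪z, gram A B T w⟫ := by
  rw [gram_inner, real_inner_comm (gram A B T w) z, gram_inner]
  exact setIntegral_congr_fun measurableSet_Ioc fun t _ => real_inner_comm _ _

lemma adjOut_ae_zero (A : Matrix (Fin n) (Fin n) ℝ) (B : Matrix (Fin n) (Fin m) ℝ) (T : ℝ)
    {z : EuclideanSpace ℝ (Fin n)} (hz : gram A B T z = 0) :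
    ∀ᵐ t ∂(volume.restrict (Ioc (0:ℝ) T)), adjOut A B T z t = 0 := by
  have h0 : ∫ t in Ioc (0:ℝ) T, ⟪adjOut A B T z t, adjOut A B T z t⟫ = 0 := by
    rw [← gram_inner, hz, inner_zero_left]
  have := (integral_eq_zero_iff_of_nonneg_ae
    (Filter.Eventually.of_forall fun t => real_inner_self_nonneg)
    (integrable_inner_adjOut_pair A B T z z)).1 h0
  filter_upwards [this] with t ht
  exact inner_self_eq_zero.1 ht

lemma exists_gram_eq (A : Matrix (Fin n) (Fin n) ℝ) (B : Matrix (Fin n) (Fin m) ℝ) (T : ℝ)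
    (c : EuclideanSpace ℝ (Fin n)) (hc : ∀ z, gram A B T z = 0 → ⟪c, z⟫ = 0) :
    ∃ z, gram A B T z = c := by
  set Φ := gram A B T
  set K := LinearMap.range Φ
  set c' := c - (K.orthogonalProjectionOnto c : EuclideanSpace ℝ (Fin n)) with hc'def
  have hc'mem : c' ∈ Kᗮ := K.sub_starProjection_mem_orthogonal c
  have hΦc' : Φ c' = 0 := by
    have h : ∀ y, ⟪Φ c', y⟫ = 0 := fun y => by
      rw [gram_symm]
      exact (real_inner_comm (Φ y) c').trans (hc'mem (Φ y) ⟨y, rfl⟩)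
    have := h (Φ c')
    exact inner_self_eq_zero.1 (by rw [real_inner_comm] at this; exact this)
  have h1 : ⟪c, c'⟫ = 0 := hc c' hΦc'
  have h2 : ⟪(K.orthogonalProjectionOnto c : EuclideanSpace ℝ (Fin n)), c'⟫ = 0 := by
    exact (Submodule.mem_orthogonal K c').1 hc'mem _ (K.orthogonalProjectionOnto c).2
  have h3 : ⟪c', c'⟫ = 0 := by
    rw [hc'def, inner_sub_left, h1, h2, sub_zero]
  have h4 : c' = 0 := inner_self_eq_zero.1 h3
  have heq : c = (K.orthogonalProjectionOnto c : EuclideanSpace ℝ (Fin n)) := by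
    rw [← sub_eq_zero]; exact h4
  obtain ⟨z, hz⟩ := (K.orthogonalProjectionOnto c).2
  exact ⟨z, by rw [hz, ← heq]⟩

lemma integrable_inner_of_bound {T : ℝ} {g h : ℝ → EuclideanSpace ℝ (Fin m)}
    (hg : Integrable g (volume.restrict (Ioc (0:ℝ) T)))
    (hmeas : AEStronglyMeasurable h (volume.restrict (Ioc (0:ℝ) T))) {C : ℝ}
    (hC : ∀ᵐ t ∂(volume.restrict (Ioc (0:ℝ) T)), ‖h t‖ ≤ C) :
    Integrable (fun t => ⟪g t, h t⟫) (volume.restrict (Ioc (0:ℝ) T)) := by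
  refine Integrable.mono' (g := fun t => C * ‖g t‖) (hg.norm.const_mul C)
    (hg.aestronglyMeasurable.inner hmeas) ?_
  filter_upwards [hC] with t ht
  calc ‖⟪g t, h t⟫‖ ≤ ‖g t‖ * ‖h t‖ := norm_inner_le_norm _ _
  _ ≤ ‖g t‖ * C := mul_le_mul_of_nonneg_left ht (norm_nonneg _)
  _ = C * ‖g t‖ := mul_comm _ _

lemma bound_adjOut (A : Matrix (Fin n) (Fin n) ℝ) (B : Matrix (Fin n) (Fin m) ℝ)
    (T : ℝ) (x : EuclideanSpace ℝ (Fin n)) :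
    ∃ C : ℝ, ∀ t ∈ Icc (0:ℝ) T, ‖adjOut A B T x t‖ ≤ C := by
  obtain ⟨D, hD⟩ := isCompact_Icc.exists_bound_of_continuousOn
    (s := Icc (0:ℝ) T) (continuous_adjOut A B T x).continuousOn
  exact ⟨D, fun t ht => hD t ht⟩


/-- Let `T ∈ (0,∞)` and `f ∈ L¹(0,T;ℝ^m)`.  If `∫₀ᵀ ⟨f(t), u(t)⟩ dt = 0`
for every `u ∈ L^∞(0,T;ℝ^m)` with `∫₀ᵀ e^{(T-s)A} B u(s) ds = 0`, then there is `z ∈ ℝⁿ`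
with `f(t) = B^⊤ e^{(T-t)A^⊤} z` for a.e. `t ∈ (0,T)`. -/
theorem statement9 {n m : ℕ} (hn : 1 ≤ n) (hm : 1 ≤ m)
    (A : Matrix (Fin n) (Fin n) ℝ) (B : Matrix (Fin n) (Fin m) ℝ) (hB : B ≠ 0)
    (T : ℝ) (hT : 0 < T) (f : ℝ → EuclideanSpace ℝ (Fin m))
    (hf : IntegrableOn f (Ioo (0 : ℝ) T))
    (horth : ∀ u : ℝ → EuclideanSpace ℝ (Fin m), Measurable u → supNorm T u < ⊤ →
      reachOutput A B T u = 0 → ∫ t in Ioc (0 : ℝ) T, ⟪f t, u t⟫ = 0) :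
    ∃ z : EuclideanSpace ℝ (Fin n),
      ∀ᵐ t ∂(volume.restrict (Ioo (0 : ℝ) T)), f t = adjOut A B T z t := by
  classical
  have hrest : (volume : Measure ℝ).restrict (Ioo (0:ℝ) T) = volume.restrict (Ioc 0 T) :=
    restrict_Ioo_eq_Ioc T
  have hfI : Integrable f (volume.restrict (Ioc (0:ℝ) T)) := by
    rw [← hrest]; exact hf
  have hfint : ∀ w, Integrable (fun t => ⟪f t, adjOut A B T w t⟫)
      (volume.restrict (Ioc (0:ℝ) T)) := by
    intro w
    obtain ⟨C, hC⟩ := bound_adjOut A B T w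
    refine integrable_inner_of_bound hfI
      (continuous_adjOut A B T w).aestronglyMeasurable (C := C) ?_
    filter_upwards [ae_restrict_mem measurableSet_Ioc] with t ht
    exact hC t ⟨le_of_lt ht.1, ht.2⟩
  have hzero : ∀ u : ℝ → EuclideanSpace ℝ (Fin m), Measurable u → supNorm T u < ⊤ →
      (∀ x, ∫ t in Ioc (0:ℝ) T, ⟪u t, adjOut A B T x t⟫ = 0) →
      ∫ t in Ioc (0:ℝ) T, ⟪f t, u t⟫ = 0 := by
    intro u hu hb hx
    refine horth u hu hb ?_
    have h1 := inner_reachOutput A B hu hb (reachOutput A B T u)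
    rw [hx (reachOutput A B T u)] at h1
    exact inner_self_eq_zero.1 h1
  have hcspec := inner_vecInt A B T f hfint
  have hcorth : ∀ z, gram A B T z = 0 → ⟪vecInt A B T f, z⟫ = 0 := by
    intro z hz
    rw [hcspec z]
    refine hzero (adjOut A B T z) (continuous_adjOut A B T z).measurable
      (supNorm_adjOut_lt_top A B T z) (fun x => ?_)
    rw [← gram_inner, hz, inner_zero_left]
  obtain ⟨z, hzc⟩ := exists_gram_eq A B T (vecInt A B T f) hcorth
  have hkey : ∀ w : ℝ → EuclideanSpace ℝ (Fin m), Measurable w → supNorm T w < ⊤ →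
      ∫ t in Ioc (0:ℝ) T, ⟪f t, w t⟫ = ∫ t in Ioc (0:ℝ) T, ⟪adjOut A B T z t, w t⟫ := by
    intro w hw hbw
    have hwint : ∀ x, Integrable (fun t => ⟪w t, adjOut A B T x t⟫)
        (volume.restrict (Ioc (0:ℝ) T)) := fun x => integrable_inner_adjOut_right A B hw hbw x
    have hdspec := inner_vecInt A B T w hwint
    have hdorth : ∀ z', gram A B T z' = 0 → ⟪vecInt A B T w, z'⟫ = 0 := by
      intro z' hz'
      rw [hdspec z']
      have h0 := adjOut_ae_zero A B T hz'
      have : (fun t => ⟪w t, adjOut A B T z' t⟫) =ᵐ[volume.restrict (Ioc (0:ℝ) T)]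
          (fun _ => (0:ℝ)) := by
        filter_upwards [h0] with t ht
        rw [ht, inner_zero_right]
      rw [integral_congr_ae this, integral_zero]
    obtain ⟨y, hy⟩ := exists_gram_eq A B T (vecInt A B T w) hdorth
    set u : ℝ → EuclideanSpace ℝ (Fin m) := fun t => w t - adjOut A B T y t with hudef
    have hu : Measurable u := hw.sub (continuous_adjOut A B T y).measurable
    have hbu : supNorm T u < ⊤ := by
      have h1 : supNorm T u ≤ supNorm T w + supNorm T (adjOut A B T y) := by
        refine eLpNorm_sub_le ?_ ?_ le_top
        · exact hw.aestronglyMeasurable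
        · exact (continuous_adjOut A B T y).aestronglyMeasurable
      exact lt_of_le_of_lt h1 (ENNReal.add_lt_top.2 ⟨hbw, supNorm_adjOut_lt_top A B T y⟩)
    -- u has zero pairings with all adjOut x
    have hux : ∀ x, ∫ t in Ioc (0:ℝ) T, ⟪u t, adjOut A B T x t⟫ = 0 := by
      intro x
      have h1 : ∫ t in Ioc (0:ℝ) T, ⟪u t, adjOut A B T x t⟫
          = (∫ t in Ioc (0:ℝ) T, ⟪w t, adjOut A B T x t⟫)
            - ∫ t in Ioc (0:ℝ) T, ⟪adjOut A B T y t, adjOut A B T x t⟫ := by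
        rw [← integral_sub (hwint x) (integrable_inner_adjOut_pair A B T y x)]
        refine setIntegral_congr_fun measurableSet_Ioc fun t _ => ?_
        rw [hudef]
        simp [inner_sub_left]
      rw [h1, ← hdspec x, ← gram_inner, hy, sub_self]
    have hfu : ∫ t in Ioc (0:ℝ) T, ⟪f t, u t⟫ = 0 := hzero u hu hbu hux
    -- bound for w
    obtain ⟨Cw, hCw0, hCw⟩ := ae_bound_of_supNorm_lt_top hbw
    have hfw : Integrable (fun t => ⟪f t, w t⟫) (volume.restrict (Ioc (0:ℝ) T)) :=
      integrable_inner_of_bound hfI hw.aestronglyMeasurable hCw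
    have hsplit : ∫ t in Ioc (0:ℝ) T, ⟪f t, u t⟫
        = (∫ t in Ioc (0:ℝ) T, ⟪f t, w t⟫) - ∫ t in Ioc (0:ℝ) T, ⟪f t, adjOut A B T y t⟫ := by
      rw [← integral_sub hfw (hfint y)]
      refine setIntegral_congr_fun measurableSet_Ioc fun t _ => ?_
      rw [hudef]
      simp [inner_sub_right]
    have e1 : ∫ t in Ioc (0:ℝ) T, ⟪f t, adjOut A B T y t⟫ = ⟪vecInt A B T f, y⟫ :=
      (hcspec y).symm
    have e2 : ⟪vecInt A B T f, y⟫ = ⟪vecInt A B T w, z⟫ := by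
      rw [← hzc, gram_symm, ← hy, real_inner_comm]
    have e3 : ⟪vecInt A B T w, z⟫ = ∫ t in Ioc (0:ℝ) T, ⟪adjOut A B T z t, w t⟫ := by
      rw [hdspec z]
      exact setIntegral_congr_fun measurableSet_Ioc fun t _ => real_inner_comm _ _
    have h5 := hsplit
    rw [hfu] at h5
    have e4 : ∫ t in Ioc (0:ℝ) T, ⟪f t, adjOut A B T y t⟫
        = ∫ t in Ioc (0:ℝ) T, ⟪adjOut A B T z t, w t⟫ := by rw [e1, e2, e3]
    rw [e4] at h5
    linarith [h5]
  -- final step : choose normalized difference as test function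
  have hameas : AEStronglyMeasurable f (volume.restrict (Ioc (0:ℝ) T)) :=
    hfI.aestronglyMeasurable
  set f' := hameas.mk f with hf'def
  have hff' : f =ᵐ[volume.restrict (Ioc (0:ℝ) T)] f' := hameas.ae_eq_mk
  have hf'meas : Measurable f' := hameas.stronglyMeasurable_mk.measurable
  set h : ℝ → EuclideanSpace ℝ (Fin m) := fun t => f' t - adjOut A B T z t with hhdef
  have hhmeas : Measurable h := hf'meas.sub (continuous_adjOut A B T z).measurable
  set w : ℝ → EuclideanSpace ℝ (Fin m) :=
    fun t => if h t = 0 then 0 else ‖h t‖⁻¹ • h t with hwdef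
  have hwmeas : Measurable w := by
    have hset : MeasurableSet {t : ℝ | h t = 0} := hhmeas (measurableSet_singleton 0)
    exact Measurable.ite hset measurable_const ((hhmeas.norm.inv).smul hhmeas)
  have hwb : ∀ t, ‖w t‖ ≤ 1 := by
    intro t
    simp only [hwdef]
    by_cases hc : h t = 0
    · simp [hc]
    · simp only [if_neg hc, norm_smul, norm_inv, norm_norm]
      rw [inv_mul_cancel₀ (norm_ne_zero_iff.2 hc)]
  have hbw : supNorm T w < ⊤ := supNorm_lt_top_of_bound hwb
  have hk := hkey w hwmeas hbw
  -- rewrite as integral of norms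
  have hinner : ∀ t, ⟪h t, w t⟫ = ‖h t‖ := by
    intro t
    simp only [hwdef]
    by_cases hc : h t = 0
    · simp [hc]
    · rw [if_neg hc, real_inner_smul_right, real_inner_self_eq_norm_mul_norm,
        ← mul_assoc, inv_mul_cancel₀ (norm_ne_zero_iff.2 hc), one_mul]
  obtain ⟨Cw, hCw0, hCw⟩ := ae_bound_of_supNorm_lt_top hbw
  have hfw : Integrable (fun t => ⟪f t, w t⟫) (volume.restrict (Ioc (0:ℝ) T)) :=
    integrable_inner_of_bound hfI hwmeas.aestronglyMeasurable hCw
  have hzw : Integrable (fun t => ⟪adjOut A B T z t, w t⟫) (volume.restrict (Ioc (0:ℝ) T)) :=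
    integrable_inner_of_bound ((continuous_adjOut A B T z).integrableOn_Ioc)
      hwmeas.aestronglyMeasurable hCw
  have hnorm0 : ∫ t in Ioc (0:ℝ) T, ‖h t‖ = 0 := by
    have hcong : ∫ t in Ioc (0:ℝ) T, ‖h t‖
        = ∫ t in Ioc (0:ℝ) T, (⟪f t, w t⟫ - ⟪adjOut A B T z t, w t⟫) := by
      refine integral_congr_ae ?_
      filter_upwards [hff'] with t ht
      rw [← hinner t, hhdef]
      simp only [inner_sub_left]
      rw [← ht]
    rw [hcong, integral_sub hfw hzw, hk, sub_self]
  have hhint : Integrable h (volume.restrict (Ioc (0:ℝ) T)) :=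
    (hfI.congr hff').sub ((continuous_adjOut A B T z).integrableOn_Ioc)
  have hae : ∀ᵐ t ∂(volume.restrict (Ioc (0:ℝ) T)), ‖h t‖ = 0 := by
    have := (integral_eq_zero_iff_of_nonneg_ae
      (Filter.Eventually.of_forall fun t => norm_nonneg (h t)) hhint.norm).1 hnorm0
    filter_upwards [this] with t ht
    exact ht
  refine ⟨z, ?_⟩
  rw [hrest]
  filter_upwards [hae, hff'] with t ht1 ht2
  have : h t = 0 := norm_eq_zero.1 ht1
  rw [hhdef] at this
  have : f' t = adjOut A B T z t := by
    have := sub_eq_zero.1 this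
    exact this
  rw [ht2, this]


end ControlBBP
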